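/- arXiv:1409.5964 — 9 statements merged into one kernel-verified Lean document; each statement's English description precedes it below -/
import Mathlib

section
/- There exists h₁ ≥ h₀ - 1 such that for all h ≥ h₁, n(h+1, A_k) = n(h, A_k) + a_k. More precisely, if h satisfies n(h, A_k) ≥ (h+1)·a_{k-1} - a_k then n(h+1, A_k) = n(h, A_k) + a_k. -/
/-- `x` is a sum of at most `h` elements of `{a 1, ..., a k}` with repetition. -/
def IsRep (k : ℕ) (a : ℕ → ℕ) (h x : ℕ) : Prop :=
  ∃ c : ℕ → ℕ, (∑ i ∈ Finset.Icc 1 k, c i) ≤ h ∧ (∑ i ∈ Finset.Icc 1 k, c i * a i) = x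

/-- `n` is the `h`-range of `{a 1, ..., a k}`. -/
def IsRange (k : ℕ) (a : ℕ → ℕ) (h n : ℕ) : Prop :=
  (∀ x ≤ n, IsRep k a h x) ∧ ¬ IsRep k a h (n + 1)

lemma rep_mono {k : ℕ} {a : ℕ → ℕ} {h h' x : ℕ} (hh : h ≤ h')
    (hx : IsRep k a h x) : IsRep k a h' x := by
  obtain ⟨c, h1, h2⟩ := hx
  exact ⟨c, h1.trans hh, h2⟩

lemma rep_add {k : ℕ} {a : ℕ → ℕ} {h x : ℕ} (hk : 1 ≤ k)
    (hx : IsRep k a h x) : IsRep k a (h + 1) (x + a k) := by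
  obtain ⟨c, h1, h2⟩ := hx
  have hkk : k ∈ Finset.Icc 1 k := Finset.mem_Icc.mpr ⟨hk, le_rfl⟩
  refine ⟨fun i => c i + if i = k then 1 else 0, ?_, ?_⟩
  · rw [Finset.sum_add_distrib, Finset.sum_ite_eq' (Finset.Icc 1 k) k (fun _ => 1),
      if_pos hkk]
    omega
  · have : ∀ i ∈ Finset.Icc 1 k,
        (c i + if i = k then 1 else 0) * a i = c i * a i + (if i = k then a i else 0) := by
      intro i _
      by_cases h' : i = k <;> simp [h'] <;> ring
    rw [Finset.sum_congr rfl this, Finset.sum_add_distrib,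
      Finset.sum_ite_eq' (Finset.Icc 1 k) k (fun i => a i), if_pos hkk, h2]

/-- Theorem 2: there is `h₁ ≥ h₀ - 1` with `n(h+1) = n(h) + a k` for all `h ≥ h₁`;
more precisely, for `h ≥ h₀ - 1`, if `n(h) ≥ (h+1)·a (k-1) - a k` then `n(h+1) = n(h) + a k`. -/
theorem stmt1 (k : ℕ) (hk : 2 ≤ k) (a : ℕ → ℕ) (ha1 : a 1 = 1)
    (hmono : StrictMonoOn a (Set.Icc 1 k))
    (n : ℕ → ℕ) (hn : ∀ h, IsRange k a h (n h))
    (h₀ : ℕ) (hh₀ : a k ≤ n h₀) (hmin : ∀ h, a k ≤ n h → h₀ ≤ h) :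
    (∃ h₁, h₀ ≤ h₁ + 1 ∧ ∀ h, h₁ ≤ h → n (h + 1) = n h + a k) ∧
    (∀ h, h₀ ≤ h + 1 → (h + 1) * a (k - 1) ≤ n h + a k → n (h + 1) = n h + a k) := by
  have hk1 : 1 ≤ k := by omega
  have hkm : k - 1 ∈ Set.Icc 1 k := ⟨by omega, by omega⟩
  have hkk : k ∈ Set.Icc 1 k := ⟨hk1, le_rfl⟩
  have hkkF : k ∈ Finset.Icc 1 k := Finset.mem_Icc.mpr ⟨hk1, le_rfl⟩
  have hak : a (k - 1) < a k := hmono hkm hkk (by omega)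
  have hA1 : 1 ≤ a (k - 1) := by
    have := hmono.monotoneOn ⟨le_rfl, hk1⟩ hkm (by omega)
    omega
  have mono : Monotone n := by
    apply monotone_nat_of_le_succ
    intro h
    by_contra hc
    push_neg at hc
    exact (hn (h + 1)).2 (rep_mono (Nat.le_succ h) ((hn h).1 _ (by omega)))
  have lower : ∀ h, a k ≤ n (h + 1) → n h + a k ≤ n (h + 1) := by
    intro h hk'
    by_contra hc
    push_neg at hc
    have hy2 : n (h + 1) + 1 - a k ≤ n h := by omega
    have := rep_add hk1 ((hn h).1 _ hy2)
    have hy : (n (h + 1) + 1 - a k) + a k = n (h + 1) + 1 := by omega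
    rw [hy] at this
    exact (hn (h + 1)).2 this
  have upper : ∀ h, (h + 1) * a (k - 1) ≤ n h + a k → n (h + 1) ≤ n h + a k := by
    intro h hi
    by_contra hc
    push_neg at hc
    obtain ⟨c, hc1, hc2⟩ := (hn (h + 1)).1 (n h + a k + 1) (by omega)
    by_cases hck : c k = 0
    · have hb : ∀ i ∈ Finset.Icc 1 k, c i * a i ≤ c i * a (k - 1) := by
        intro i hi'
        rw [Finset.mem_Icc] at hi'
        by_cases h' : i = k
        · simp [h', hck]
        · exact Nat.mul_le_mul_left _
            (hmono.monotoneOn ⟨hi'.1, hi'.2⟩ hkm (by omega))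
      have hfin : n h + a k + 1 ≤ (h + 1) * a (k - 1) := by
        calc n h + a k + 1 = ∑ i ∈ Finset.Icc 1 k, c i * a i := hc2.symm
          _ ≤ ∑ i ∈ Finset.Icc 1 k, c i * a (k - 1) := Finset.sum_le_sum hb
          _ = (∑ i ∈ Finset.Icc 1 k, c i) * a (k - 1) := (Finset.sum_mul _ _ _).symm
          _ ≤ (h + 1) * a (k - 1) := Nat.mul_le_mul_right _ hc1
      omega
    · have hrep : IsRep k a h (n h + 1) := by
        refine ⟨fun i => if i = k then c k - 1 else c i, ?_, ?_⟩
        · have e1 : ∑ i ∈ Finset.Icc 1 k, (if i = k then c k - 1 else c i)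
              = (c k - 1) + ∑ i ∈ (Finset.Icc 1 k).erase k, c i := by
            rw [← Finset.add_sum_erase _ _ hkkF, if_pos rfl]
            congr 1
            exact Finset.sum_congr rfl fun i hi' => if_neg (Finset.ne_of_mem_erase hi')
          have e2 : ∑ i ∈ Finset.Icc 1 k, c i
              = c k + ∑ i ∈ (Finset.Icc 1 k).erase k, c i :=
            (Finset.add_sum_erase _ _ hkkF).symm
          rw [e1]
          omega
        · have e1 : ∑ i ∈ Finset.Icc 1 k, (if i = k then c k - 1 else c i) * a i
              = (c k - 1) * a k + ∑ i ∈ (Finset.Icc 1 k).erase k, c i * a i := by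
            rw [← Finset.add_sum_erase _ _ hkkF, if_pos rfl]
            congr 1
            exact Finset.sum_congr rfl fun i hi' => by
              rw [if_neg (Finset.ne_of_mem_erase hi')]
          have e2 : ∑ i ∈ Finset.Icc 1 k, c i * a i
              = c k * a k + ∑ i ∈ (Finset.Icc 1 k).erase k, c i * a i :=
            (Finset.add_sum_erase _ _ hkkF).symm
          have e3 : c k * a k = (c k - 1) * a k + a k := by
            nth_rewrite 1 [show c k = (c k - 1) + 1 by omega]
            ring
          rw [e1]
          rw [e2, e3] at hc2
          omega
      exact (hn h).2 hrep
  have main : ∀ h, h₀ ≤ h + 1 → (h + 1) * a (k - 1) ≤ n h + a k →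
      n (h + 1) = n h + a k := by
    intro h hh hi
    exact le_antisymm (upper h hi) (lower h (hh₀.trans (mono hh)))
  have nge : ∀ m, (m + 1) * a k ≤ n (h₀ + m) := by
    intro m
    induction m with
    | zero => simpa using hh₀
    | succ m ih =>
      have h1 : a k ≤ n (h₀ + m + 1) := hh₀.trans (mono (by omega))
      have h2 := lower (h₀ + m) h1
      calc (m + 1 + 1) * a k = (m + 1) * a k + a k := by ring
        _ ≤ n (h₀ + m) + a k := by omega
        _ ≤ n (h₀ + m + 1) := h2
  refine ⟨⟨h₀ + h₀ * a (k - 1), by omega, ?_⟩, main⟩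
  intro h hh
  obtain ⟨m, rfl⟩ : ∃ m, h = h₀ + m := ⟨h - h₀, by omega⟩
  apply main _ (by omega)
  have h1 := nge m
  have hm' : h₀ * a (k - 1) ≤ m := by omega
  nlinarith [h1, hak, hA1, hm']
end

section
/- If h satisfies n(h, A_k) ≥ (h+1)·a_{k-1} - a_k, and x is a gap at level h (i.e., n(h, A_k) < x < h·a_k and x has no h-representation), then x + a_k is a gap at level h+1 (i.e., x + a_k has no (h+1)-representation). -/
/-- Theorem 3 (key step): if `h ≥ h₀ - 1` satisfies `n(h) ≥ (h+1)·a (k-1) - a k` and `x`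
is a gap at level `h`, then `x + a k` is a gap at level `h+1` (no `(h+1)`-representation). -/
theorem stmt2 (k : ℕ) (hk : 2 ≤ k) (a : ℕ → ℕ) (ha1 : a 1 = 1)
    (hmono : StrictMonoOn a (Set.Icc 1 k))
    (n : ℕ → ℕ) (hn : ∀ h, IsRange k a h (n h))
    (h₀ : ℕ) (hh₀ : a k ≤ n h₀) (hmin : ∀ h, a k ≤ n h → h₀ ≤ h)
    (h : ℕ) (hh : h₀ ≤ h + 1) (hcond : (h + 1) * a (k - 1) ≤ n h + a k)
    (x : ℕ) (hx1 : n h < x) (hx2 : x < h * a k) (hx3 : ¬ IsRep k a h x) :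
    ¬ IsRep k a (h + 1) (x + a k) := by
  rintro ⟨c, hc1, hc2⟩
  have hkmem : k ∈ Finset.Icc 1 k := by simp; omega
  by_cases hck : c k = 0
  · -- then x + a k ≤ (h+1) * a (k-1) ≤ n h + a k, contradicting n h < x
    have hk1 : (k - 1 : ℕ) ∈ Set.Icc 1 k := ⟨by omega, by omega⟩
    have hbound : ∀ i ∈ Finset.Icc 1 k, c i * a i ≤ c i * a (k - 1) := by
      intro i hi
      simp only [Finset.mem_Icc] at hi
      rcases eq_or_lt_of_le hi.2 with he | hl
      · subst he; simp [hck]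
      · exact Nat.mul_le_mul_left _
          (hmono.monotoneOn ⟨hi.1, hi.2⟩ hk1 (by omega))
    have hle : x + a k ≤ (h + 1) * a (k - 1) := by
      calc x + a k = ∑ i ∈ Finset.Icc 1 k, c i * a i := hc2.symm
        _ ≤ ∑ i ∈ Finset.Icc 1 k, c i * a (k - 1) := Finset.sum_le_sum hbound
        _ = (∑ i ∈ Finset.Icc 1 k, c i) * a (k - 1) := (Finset.sum_mul ..).symm
        _ ≤ (h + 1) * a (k - 1) := Nat.mul_le_mul_right _ hc1
    omega
  · -- c k ≥ 1: subtract one copy of a k to get an h-representation of x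
    apply hx3
    refine ⟨fun i => if i = k then c k - 1 else c i, ?_, ?_⟩
    · rw [← Finset.sum_erase_add _ _ hkmem] at hc1 ⊢
      have he : ∑ i ∈ (Finset.Icc 1 k).erase k, (if i = k then c k - 1 else c i)
          = ∑ i ∈ (Finset.Icc 1 k).erase k, c i :=
        Finset.sum_congr rfl fun i hi => if_neg (Finset.ne_of_mem_erase hi)
      rw [he, if_pos rfl]
      omega
    · rw [← Finset.sum_erase_add _ _ hkmem] at hc2 ⊢
      have he : ∑ i ∈ (Finset.Icc 1 k).erase k, (if i = k then c k - 1 else c i) * a i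
          = ∑ i ∈ (Finset.Icc 1 k).erase k, c i * a i :=
        Finset.sum_congr rfl fun i hi => by rw [if_neg (Finset.ne_of_mem_erase hi)]
      beta_reduce
      rw [he, if_pos rfl]
      have hm : (c k - 1) * a k + a k = c k * a k := by
        rw [Nat.sub_one_mul]
        exact Nat.sub_add_cancel (Nat.le_mul_of_pos_left _ (Nat.pos_of_ne_zero hck))
      omega
end

section
/- Suppose x = n(h, A_k) + a_k + 1 has an (h+1)-representation x = c_k·a_k + ... + c_1·a_1. Then c_k = 0, and consequently x ≤ (h+1)·a_{k-1}. -/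
/-- If `x = n(h) + a k + 1` has an `(h+1)`-representation `∑ cᵢ·aᵢ`, then `c k = 0`,
and consequently `x ≤ (h+1)·a (k-1)`. -/
theorem stmt3 (k : ℕ) (hk : 2 ≤ k) (a : ℕ → ℕ) (ha1 : a 1 = 1)
    (hmono : StrictMonoOn a (Set.Icc 1 k))
    (n : ℕ → ℕ) (hn : ∀ h, IsRange k a h (n h))
    (h : ℕ) (c : ℕ → ℕ)
    (hbudget : (∑ i ∈ Finset.Icc 1 k, c i) ≤ h + 1)
    (hrep : (∑ i ∈ Finset.Icc 1 k, c i * a i) = n h + a k + 1) :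
    c k = 0 ∧ n h + a k + 1 ≤ (h + 1) * a (k - 1) := by
  have hk1 : 1 ≤ k := by omega
  have hkmem : k ∈ Finset.Icc 1 k := Finset.mem_Icc.mpr ⟨hk1, le_refl k⟩
  have hck : c k = 0 := by
    by_contra hck
    have h1 : 1 ≤ c k := Nat.one_le_iff_ne_zero.mpr hck
    set c' : ℕ → ℕ := fun i => if i = k then c i - 1 else c i with hc'
    have hagree : ∀ i ∈ (Finset.Icc 1 k).erase k, c' i = c i := by
      intro i hi
      simp [hc', Finset.ne_of_mem_erase hi]
    have hagree2 : ∀ i ∈ (Finset.Icc 1 k).erase k, c' i * a i = c i * a i := by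
      intro i hi; rw [hagree i hi]
    have e1 : ∑ i ∈ Finset.Icc 1 k, c' i = (∑ i ∈ (Finset.Icc 1 k).erase k, c' i) + c' k :=
      (Finset.sum_erase_add _ _ hkmem).symm
    have e2 : ∑ i ∈ Finset.Icc 1 k, c i = (∑ i ∈ (Finset.Icc 1 k).erase k, c i) + c k :=
      (Finset.sum_erase_add _ _ hkmem).symm
    have e3 : ∑ i ∈ (Finset.Icc 1 k).erase k, c' i = ∑ i ∈ (Finset.Icc 1 k).erase k, c i :=
      Finset.sum_congr rfl hagree
    have e4 : c' k = c k - 1 := by simp [hc']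
    have hsum : ∑ i ∈ Finset.Icc 1 k, c' i = (∑ i ∈ Finset.Icc 1 k, c i) - 1 := by omega
    have f1 : ∑ i ∈ Finset.Icc 1 k, c' i * a i =
        (∑ i ∈ (Finset.Icc 1 k).erase k, c' i * a i) + c' k * a k :=
      (Finset.sum_erase_add _ _ hkmem).symm
    have f2 : ∑ i ∈ Finset.Icc 1 k, c i * a i =
        (∑ i ∈ (Finset.Icc 1 k).erase k, c i * a i) + c k * a k :=
      (Finset.sum_erase_add _ _ hkmem).symm
    have f3 : ∑ i ∈ (Finset.Icc 1 k).erase k, c' i * a i =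
        ∑ i ∈ (Finset.Icc 1 k).erase k, c i * a i :=
      Finset.sum_congr rfl hagree2
    have f4 : c' k * a k = c k * a k - a k := by
      rw [e4, Nat.sub_mul, one_mul]
    have hle : a k ≤ c k * a k := Nat.le_mul_of_pos_left _ h1
    have hval : ∑ i ∈ Finset.Icc 1 k, c' i * a i =
        (∑ i ∈ Finset.Icc 1 k, c i * a i) - a k := by omega
    apply (hn h).2
    refine ⟨c', ?_, ?_⟩
    · omega
    · rw [hval, hrep]
      have hak : 1 ≤ a k := by
        calc 1 = a 1 := ha1.symm
        _ ≤ a k := le_of_lt (hmono ⟨le_refl 1, hk1⟩ ⟨hk1, le_refl k⟩ (by omega))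
      omega
  refine ⟨hck, ?_⟩
  obtain ⟨m, rfl⟩ : ∃ m, k = m + 1 := ⟨k - 1, by omega⟩
  have hm1 : 1 ≤ m := by omega
  have hsplit : ∑ i ∈ Finset.Icc 1 (m + 1), c i * a i =
      (∑ i ∈ Finset.Icc 1 m, c i * a i) + c (m + 1) * a (m + 1) :=
    Finset.sum_Icc_succ_top (by omega) _
  rw [hck, zero_mul, add_zero] at hsplit
  have hbd : ∑ i ∈ Finset.Icc 1 m, c i * a i ≤ (∑ i ∈ Finset.Icc 1 m, c i) * a m := by
    rw [Finset.sum_mul]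
    apply Finset.sum_le_sum
    intro i hi
    have hi' := Finset.mem_Icc.mp hi
    have : a i ≤ a m := hmono.monotoneOn ⟨hi'.1, by omega⟩ ⟨hm1, by omega⟩ hi'.2
    exact Nat.mul_le_mul_left _ this
  have hsub : ∑ i ∈ Finset.Icc 1 m, c i ≤ ∑ i ∈ Finset.Icc 1 (m + 1), c i :=
    Finset.sum_le_sum_of_subset (Finset.Icc_subset_Icc le_rfl (by omega))
  have : ∑ i ∈ Finset.Icc 1 m, c i ≤ h + 1 := le_trans hsub hbudget
  calc n h + a (m + 1) + 1 = ∑ i ∈ Finset.Icc 1 m, c i * a i := by rw [← hrep, hsplit]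
    _ ≤ (∑ i ∈ Finset.Icc 1 m, c i) * a m := hbd
    _ ≤ (h + 1) * a m := Nat.mul_le_mul_right _ this
    _ = (h + 1) * a (m + 1 - 1) := by norm_num
end

section
/- If x is an h-gap (for h > h₀ - 1), then x < (h₀ - 1)·a_k. -/
/-- `x` is an `h`-gap (relative to base level `h₀ - 1`): writing
`x_m = x + (m - (h₀-1))·a k`, the value `x_h` has an `h`-representation, but `x_m` has no
`m`-representation for any `h₀ - 1 ≤ m < h`. -/
def IsHGap (k : ℕ) (a : ℕ → ℕ) (h₀ h x : ℕ) : Prop :=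
  IsRep k a h (x + (h - (h₀ - 1)) * a k) ∧
  ∀ m, h₀ - 1 ≤ m → m < h → ¬ IsRep k a m (x + (m - (h₀ - 1)) * a k)

/-- Lemma 1: if `x` is an `h`-gap (with `h > h₀ - 1`), then `x < (h₀ - 1)·a k`. -/
theorem stmt5 (k : ℕ) (hk : 2 ≤ k) (a : ℕ → ℕ) (ha1 : a 1 = 1)
    (hmono : StrictMonoOn a (Set.Icc 1 k))
    (n : ℕ → ℕ) (hn : ∀ h, IsRange k a h (n h))
    (h₀ : ℕ) (hh₀ : a k ≤ n h₀) (hmin : ∀ h, a k ≤ n h → h₀ ≤ h)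
    (h x : ℕ) (hh : h₀ - 1 < h) (hx : n (h₀ - 1) < x)
    (hgap : IsHGap k a h₀ h x) :
    x < (h₀ - 1) * a k := by
  by_contra hcon
  push_neg at hcon
  obtain ⟨⟨c, hc1, hc2⟩, hgap2⟩ := hgap
  have hkmem : k ∈ Finset.Icc 1 k := Finset.mem_Icc.mpr ⟨by omega, le_rfl⟩
  have hak : ∀ i ∈ Finset.Icc 1 k, a i ≤ a k := by
    intro i hi
    simp only [Finset.mem_Icc] at hi
    exact hmono.monotoneOn ⟨hi.1, hi.2⟩ ⟨by omega, le_rfl⟩ hi.2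
  have hb : x + (h - (h₀ - 1)) * a k ≤ h * a k := by
    rw [← hc2]
    calc ∑ i ∈ Finset.Icc 1 k, c i * a i
        ≤ ∑ i ∈ Finset.Icc 1 k, c i * a k :=
          Finset.sum_le_sum fun i hi => Nat.mul_le_mul_left _ (hak i hi)
      _ = (∑ i ∈ Finset.Icc 1 k, c i) * a k := by rw [Finset.sum_mul]
      _ ≤ h * a k := Nat.mul_le_mul_right _ hc1
  have hsplit : h * a k = (h₀ - 1) * a k + (h - (h₀ - 1)) * a k := by
    rw [← Nat.add_mul]; congr 1; omega
  have hxle : x ≤ (h₀ - 1) * a k := by omega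
  have hxeq : x = (h₀ - 1) * a k := le_antisymm hxle hcon
  apply hgap2 (h₀ - 1) le_rfl hh
  have : x + (h₀ - 1 - (h₀ - 1)) * a k = x := by simp
  rw [this]
  refine ⟨fun i => if i = k then h₀ - 1 else 0, ?_, ?_⟩
  · simp [Finset.sum_ite_eq', hkmem]
  · have heq : ∀ i ∈ Finset.Icc 1 k,
        (if i = k then h₀ - 1 else 0) * a i = if i = k then (h₀ - 1) * a k else 0 := by
      intro i _; split <;> simp_all
    rw [Finset.sum_congr rfl heq]
    simp [Finset.sum_ite_eq', hkmem, hxeq]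
end

section
/- If x is an h-gap and x_h = c_k·a_k + c_{k-1}·a_{k-1} + ... + c_1·a_1 is an h-representation of x_h, then c_k = 0. -/
/-- Lemma 2: if `x` is an `h`-gap and `x_h = ∑ cᵢ·aᵢ` is an `h`-representation of `x_h`,
then `c k = 0`. -/
theorem stmt6 (k : ℕ) (hk : 2 ≤ k) (a : ℕ → ℕ) (ha1 : a 1 = 1)
    (hmono : StrictMonoOn a (Set.Icc 1 k))
    (n : ℕ → ℕ) (hn : ∀ h, IsRange k a h (n h))
    (h₀ : ℕ) (hh₀ : a k ≤ n h₀) (hmin : ∀ h, a k ≤ n h → h₀ ≤ h)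
    (h x : ℕ) (hh : h₀ ≤ h) (hx : n (h₀ - 1) < x)
    (hgap : IsHGap k a h₀ h x)
    (c : ℕ → ℕ) (hbudget : (∑ i ∈ Finset.Icc 1 k, c i) ≤ h)
    (hrep : (∑ i ∈ Finset.Icc 1 k, c i * a i) = x + (h - (h₀ - 1)) * a k) :
    c k = 0 := by
  by_contra hck
  have hck1 : 1 ≤ c k := Nat.one_le_iff_ne_zero.mpr hck
  have hkmem : k ∈ Finset.Icc 1 k := Finset.mem_Icc.mpr ⟨by omega, le_refl k⟩
  have hsum1 : 1 ≤ ∑ i ∈ Finset.Icc 1 k, c i :=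
    le_trans hck1 (Finset.single_le_sum (fun i _ => Nat.zero_le _) hkmem)
  have hh1 : 1 ≤ h := le_trans hsum1 hbudget
  classical
  let c' : ℕ → ℕ := fun i => if i = k then c k - 1 else c i
  have hck' : c' k = c k - 1 := by simp [c']
  have hag1 : ∑ i ∈ (Finset.Icc 1 k).erase k, c' i
      = ∑ i ∈ (Finset.Icc 1 k).erase k, c i :=
    Finset.sum_congr rfl fun i hi => by simp [c', Finset.ne_of_mem_erase hi]
  have hag2 : ∑ i ∈ (Finset.Icc 1 k).erase k, c' i * a i
      = ∑ i ∈ (Finset.Icc 1 k).erase k, c i * a i :=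
    Finset.sum_congr rfl fun i hi => by simp [c', Finset.ne_of_mem_erase hi]
  have split1 : ∑ i ∈ Finset.Icc 1 k, c' i
      = (∑ i ∈ (Finset.Icc 1 k).erase k, c i) + (c k - 1) := by
    rw [← Finset.sum_erase_add (Finset.Icc 1 k) c' hkmem, hag1, hck']
  have split2 : ∑ i ∈ Finset.Icc 1 k, c i
      = (∑ i ∈ (Finset.Icc 1 k).erase k, c i) + c k := by
    rw [← Finset.sum_erase_add (Finset.Icc 1 k) c hkmem]
  have split3 : ∑ i ∈ Finset.Icc 1 k, c' i * a i
      = (∑ i ∈ (Finset.Icc 1 k).erase k, c i * a i) + (c k - 1) * a k := by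
    rw [← Finset.sum_erase_add (Finset.Icc 1 k) (fun i => c' i * a i) hkmem, hag2, hck']
  have split4 : ∑ i ∈ Finset.Icc 1 k, c i * a i
      = (∑ i ∈ (Finset.Icc 1 k).erase k, c i * a i) + c k * a k := by
    rw [← Finset.sum_erase_add (Finset.Icc 1 k) (fun i => c i * a i) hkmem]
  have hmul : (c k - 1) * a k + a k = c k * a k := by
    obtain ⟨d, hd⟩ := Nat.exists_eq_succ_of_ne_zero hck
    rw [hd]; simp; ring
  have hcoef : (h - (h₀ - 1)) * a k = (h - 1 - (h₀ - 1)) * a k + a k := by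
    have e : h - (h₀ - 1) = (h - 1 - (h₀ - 1)) + 1 := by omega
    rw [e]; ring
  apply hgap.2 (h - 1) (by omega) (by omega)
  exact ⟨c', by omega, by omega⟩
end

section
/- Let x be an h-gap with h-representation x_h = c_{k-1}·a_{k-1} + ... + c_1·a_1 (so c_k = 0). Then for any index i < k with c_i > 0, the value x' = x + (a_k - a_i) is an (h-1)-gap: x'_{h-1} has an (h-1)-representation, and x'_m has no m-representation for any m < h-1. -/
lemma sum_update_mul (s : Finset ℕ) (c a : ℕ → ℕ) (i b : ℕ) (hi : i ∈ s) :
    ∑ x ∈ s, Function.update c i b x * a x = b * a i + ∑ x ∈ s \ {i}, c x * a x := by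
  have key : ∀ x, Function.update c i b x * a x
      = Function.update (fun x => c x * a x) i (b * a i) x := by
    intro x
    rcases eq_or_ne x i with rfl | hx
    · simp
    · simp [Function.update_apply, hx]
  simp_rw [key]
  exact Finset.sum_update_of_mem hi (fun x => c x * a x) (b * a i)

lemma sum_split_mul (s : Finset ℕ) (c a : ℕ → ℕ) (i : ℕ) (hi : i ∈ s) :
    ∑ x ∈ s, c x * a x = c i * a i + ∑ x ∈ s \ {i}, c x * a x := by
  have := sum_update_mul s c a i (c i) hi
  simpa using this

lemma sum_split (s : Finset ℕ) (c : ℕ → ℕ) (i : ℕ) (hi : i ∈ s) :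
    ∑ x ∈ s, c x = c i + ∑ x ∈ s \ {i}, c x := by
  have := Finset.sum_update_of_mem (f := c) (b := c i) hi
  simpa using this

/-- Theorem 5: if `x` is an `h`-gap with `h`-representation `x_h = ∑_{i<k} cᵢ·aᵢ`
(so `c k = 0`), then for any `1 ≤ i < k` with `cᵢ > 0`, the value `x + (a k - a i)`
is an `(h-1)`-gap. -/
theorem stmt7 (k : ℕ) (hk : 2 ≤ k) (a : ℕ → ℕ) (ha1 : a 1 = 1)
    (hmono : StrictMonoOn a (Set.Icc 1 k))
    (n : ℕ → ℕ) (hn : ∀ h, IsRange k a h (n h))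
    (h₀ : ℕ) (hh₀ : a k ≤ n h₀) (hmin : ∀ h, a k ≤ n h → h₀ ≤ h)
    (h x : ℕ) (hh : h₀ < h) (hx : n (h₀ - 1) < x)
    (hgap : IsHGap k a h₀ h x)
    (c : ℕ → ℕ) (hbudget : (∑ i ∈ Finset.Icc 1 k, c i) ≤ h)
    (hrep : (∑ i ∈ Finset.Icc 1 k, c i * a i) = x + (h - (h₀ - 1)) * a k)
    (hck : c k = 0)
    (i : ℕ) (hi1 : 1 ≤ i) (hik : i < k) (hci : 0 < c i) :
    IsHGap k a h₀ (h - 1) (x + (a k - a i)) := by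
  have hik' : i ∈ Finset.Icc 1 k := Finset.mem_Icc.mpr ⟨hi1, hik.le⟩
  have haik : a i < a k :=
    hmono ⟨hi1, hik.le⟩ ⟨le_trans (by norm_num) hk, le_rfl⟩ hik
  constructor
  · -- (h-1)-representation of x + (a k - a i) + ((h-1) - (h₀-1)) * a k
    refine ⟨Function.update c i (c i - 1), ?_, ?_⟩
    · rw [Finset.sum_update_of_mem hik']
      have := sum_split (Finset.Icc 1 k) c i hik'
      omega
    · rw [sum_update_mul _ _ _ _ _ hik']
      rw [sum_split_mul (Finset.Icc 1 k) c a i hik'] at hrep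
      have hci' : c i * a i = (c i - 1) * a i + a i := by
        conv_lhs => rw [show c i = c i - 1 + 1 from by omega]
        rw [Nat.add_mul, one_mul]
      have hD : (h - (h₀ - 1)) * a k = (h - 1 - (h₀ - 1)) * a k + a k := by
        have : h - (h₀ - 1) = (h - 1 - (h₀ - 1)) + 1 := by omega
        rw [this, Nat.add_mul]
        omega
      omega
  · -- no m-representation below h-1
    rintro m hm1 hm2 ⟨d, hd1, hd2⟩
    refine hgap.2 (m + 1) (by omega) (by omega) ⟨Function.update d i (d i + 1), ?_, ?_⟩
    · rw [Finset.sum_update_of_mem hik']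
      have := sum_split (Finset.Icc 1 k) d i hik'
      omega
    · rw [sum_update_mul _ _ _ _ _ hik']
      rw [sum_split_mul (Finset.Icc 1 k) d a i hik'] at hd2
      have hdi : (d i + 1) * a i = d i * a i + a i := by rw [Nat.add_mul]; omega
      have hD : (m + 1 - (h₀ - 1)) * a k = (m - (h₀ - 1)) * a k + a k := by
        have : m + 1 - (h₀ - 1) = (m - (h₀ - 1)) + 1 := by omega
        rw [this, Nat.add_mul]
        omega
      omega
end

section
/- Suppose x and y are distinct h-gaps whose h-representations are x_h = (c_p + 1)·a_p and y_h = (d_q + 1)·a_q (single nonzero coefficient each, p, q < k), and both determine the same (h-1)-gap z via z = x + (a_k - a_p) = y + (a_k - a_q). Then p ≠ q, and moreover x determines a second (h-1)-gap v = x + (a_k - a_q) with v ≠ z, provided d_q + 1 ≤ h. -/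
/-- If `x ≠ y` are `h`-gaps whose `h`-representations are `x_h = (c_p+1)·a p` and
`y_h = (d_q+1)·a q` (single nonzero coefficient each, `p, q < k`), and both determine the
same `(h-1)`-gap `z = x + (a k - a p) = y + (a k - a q)`, then `p ≠ q`, and (given
`d_q + 1 ≤ h`) `x` determines a second `(h-1)`-gap `v = x + (a k - a q)` with `v ≠ z`. -/
theorem stmt9 (k : ℕ) (hk : 2 ≤ k) (a : ℕ → ℕ) (ha1 : a 1 = 1)
    (hmono : StrictMonoOn a (Set.Icc 1 k))
    (n : ℕ → ℕ) (hn : ∀ h, IsRange k a h (n h))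
    (h₀ : ℕ) (hh₀ : a k ≤ n h₀) (hmin : ∀ h, a k ≤ n h → h₀ ≤ h)
    (h x y : ℕ) (hh : h₀ < h) (hx : n (h₀ - 1) < x) (hy : n (h₀ - 1) < y) (hxy : x ≠ y)
    (hgx : IsHGap k a h₀ h x) (hgy : IsHGap k a h₀ h y)
    (p q cp dq : ℕ) (hp1 : 1 ≤ p) (hpk : p < k) (hq1 : 1 ≤ q) (hqk : q < k)
    (hrepx : x + (h - (h₀ - 1)) * a k = (cp + 1) * a p) (hcp : cp + 1 ≤ h)
    (hrepy : y + (h - (h₀ - 1)) * a k = (dq + 1) * a q) (hdq : dq + 1 ≤ h)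
    (z : ℕ) (hz1 : z = x + (a k - a p)) (hz2 : z = y + (a k - a q)) :
    p ≠ q ∧
    IsHGap k a h₀ (h - 1) (x + (a k - a q)) ∧
    x + (a k - a q) ≠ z := by
  have hpmem : p ∈ Finset.Icc 1 k := Finset.mem_Icc.2 ⟨hp1, hpk.le⟩
  have hqmem : q ∈ Finset.Icc 1 k := Finset.mem_Icc.2 ⟨hq1, hqk.le⟩
  have hpS : p ∈ Set.Icc 1 k := ⟨hp1, hpk.le⟩
  have hqS : q ∈ Set.Icc 1 k := ⟨hq1, hqk.le⟩
  have hkS : k ∈ Set.Icc 1 k := ⟨le_trans one_le_two hk, le_rfl⟩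
  have hap : a p < a k := hmono hpS hkS hpk
  have haq : a q < a k := hmono hqS hkS hqk
  have hak1 : 1 < a k := ha1 ▸ hmono ⟨le_rfl, le_trans one_le_two hk⟩ hkS (lt_of_lt_of_le one_lt_two hk)
  -- x + a q = y + a p
  have hxq : x + a q = y + a p := by
    have := hz1 ▸ hz2
    omega
  have hpq : p ≠ q := by
    intro hpq; subst hpq; apply hxy; omega
  have hpq' : a p ≠ a q := fun e => hpq (hmono.injOn hpS hqS e)
  have hne : x + (a k - a q) ≠ z := by
    intro heq
    apply hpq'
    rw [hz1] at heq
    omega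
  refine ⟨hpq, ?_, hne⟩
  set M := h - 1 - (h₀ - 1) with hM
  have hMh : h - (h₀ - 1) = M + 1 := by omega
  -- key equation: x_h = dq * a q + a p
  have hkey : x + (M + 1) * a k = dq * a q + a p := by
    have h1 : y + (M + 1) * a k = (dq + 1) * a q := hMh ▸ hrepy
    have h2 : (dq + 1) * a q = dq * a q + a q := by ring
    generalize (M + 1) * a k = S at *
    generalize dq * a q = T at *
    omega
  have hdq1 : 1 ≤ dq := by
    by_contra hd
    have hd0 : dq = 0 := by omega
    subst hd0
    have h1 : y + (M + 1) * a k = 1 * a q := hMh ▸ hrepy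
    have h2 : a k ≤ (M + 1) * a k := Nat.le_mul_of_pos_left _ (by omega)
    omega
  constructor
  · -- (h-1)-representation of v_{h-1} = (dq-1) * a q + a p
    refine ⟨fun i => (if i = q then dq - 1 else 0) + (if i = p then 1 else 0), ?_, ?_⟩
    · have : (∑ i ∈ Finset.Icc 1 k,
          ((if i = q then dq - 1 else 0) + (if i = p then 1 else 0)))
          = (dq - 1) + 1 := by
        simp [Finset.sum_add_distrib, Finset.sum_ite_eq', hpmem, hqmem]
      rw [this]; omega
    · have hs : (∑ i ∈ Finset.Icc 1 k,
          ((if i = q then dq - 1 else 0) + (if i = p then 1 else 0)) * a i)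
          = (dq - 1) * a q + 1 * a p := by
        simp [add_mul, Finset.sum_add_distrib, Finset.sum_ite_eq', ite_mul,
          hpmem, hqmem]
      rw [hs]
      have h2 : dq * a q = (dq - 1) * a q + a q := by
        have hd : dq = (dq - 1) + 1 := by omega
        calc dq * a q = ((dq - 1) + 1) * a q := by rw [← hd]
        _ = (dq - 1) * a q + a q := by ring
      have h3 : (M + 1) * a k = M * a k + a k := by ring
      have hh1 : h - 1 - (h₀ - 1) = M := rfl
      rw [hh1, one_mul]
      generalize M * a k = S at *
      generalize (dq - 1) * a q = T at *
      omega
  · -- no m-representation for h₀ - 1 ≤ m < h - 1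
    intro m hm1 hm2 hrep
    obtain ⟨c, hcs, hcv⟩ := hrep
    refine hgx.2 (m + 1) (by omega) (by omega)
      ⟨fun i => c i + (if i = q then 1 else 0), ?_, ?_⟩
    · have : (∑ i ∈ Finset.Icc 1 k, (c i + (if i = q then 1 else 0)))
          = (∑ i ∈ Finset.Icc 1 k, c i) + 1 := by
        simp [Finset.sum_add_distrib, Finset.sum_ite_eq', hqmem]
      rw [this]; omega
    · have hs : (∑ i ∈ Finset.Icc 1 k, (c i + (if i = q then 1 else 0)) * a i)
          = (∑ i ∈ Finset.Icc 1 k, c i * a i) + 1 * a q := by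
        simp [add_mul, Finset.sum_add_distrib, Finset.sum_ite_eq', ite_mul, hqmem]
      rw [hs, hcv, one_mul]
      have hm3 : m + 1 - (h₀ - 1) = (m - (h₀ - 1)) + 1 := by omega
      rw [hm3]
      have h3 : ((m - (h₀ - 1)) + 1) * a k = (m - (h₀ - 1)) * a k + a k := by ring
      generalize (m - (h₀ - 1)) * a k = S at *
      omega
end

section
/- For the set A_4 = {1, 4, 26, 35}: h₀ = 8 (i.e., every integer in [0, 35] is a sum of at most 8 elements of A_4 with repetition, but not every integer in [0, 35] is a sum of at most 7 such elements), and n(7, A_4) = 22 (every integer in [0,22] is a sum of at most 7 elements, but 23 is not). -/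
/-- The set `A₄ = {1, 4, 26, 35}` (indexed from 1). -/
def A4a : ℕ → ℕ := fun i => [0, 1, 4, 26, 35].getD i 0

theorem Finset.sum_Icc_one_four {M : Type*} [AddCommMonoid M] (f : ℕ → M) :
    ∑ i ∈ Finset.Icc 1 4, f i = f 1 + f 2 + f 3 + f 4 := by
  simp [Finset.sum_Icc_succ_top]

theorem isRep_four_iff {a : ℕ → ℕ} {h x : ℕ} :
    IsRep 4 a h x ↔ ∃ c₁ c₂ c₃ c₄ : ℕ,
      c₁ + c₂ + c₃ + c₄ ≤ h ∧ c₁ * a 1 + c₂ * a 2 + c₃ * a 3 + c₄ * a 4 = x := by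
  simp only [IsRep, Finset.sum_Icc_one_four]
  constructor
  · rintro ⟨c, hc, rfl⟩
    exact ⟨c 1, c 2, c 3, c 4, hc, rfl⟩
  · rintro ⟨c₁, c₂, c₃, c₄, hc, rfl⟩
    exact ⟨fun i => [0, c₁, c₂, c₃, c₄].getD i 0, hc, rfl⟩

theorem isRep_A4a_iff {h x : ℕ} :
    IsRep 4 A4a h x ↔ ∃ c₁ c₂ c₃ c₄ : ℕ,
      c₁ + c₂ + c₃ + c₄ ≤ h ∧ c₁ + 4 * c₂ + 26 * c₃ + 35 * c₄ = x := by
  simp only [isRep_four_iff, A4a, List.getD_cons_succ, List.getD_cons_zero, mul_one,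
    mul_comm _ 4, mul_comm _ 26, mul_comm _ 35]

theorem not_isRep_A4a_seven_23 : ¬ IsRep 4 A4a 7 23 := by
  rw [isRep_A4a_iff]
  rintro ⟨c₁, c₂, c₃, c₄, hc, hsum⟩
  obtain ⟨rfl, rfl⟩ : c₃ = 0 ∧ c₄ = 0 := by omega
  omega

theorem isRange_A4a_seven : IsRange 4 A4a 7 22 := by
  refine ⟨fun x hx => isRep_A4a_iff.2 ⟨x % 4, x / 4, 0, 0, by omega, by omega⟩,
    not_isRep_A4a_seven_23⟩

theorem isRep_A4a_eight {x : ℕ} (hx : x ≤ 35) : IsRep 4 A4a 8 x := by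
  rw [isRep_A4a_iff]
  rcases le_or_gt x 25 with h25 | h25
  · exact ⟨x % 4, x / 4, 0, 0, by omega, by omega⟩
  rcases le_or_gt x 34 with h34 | h34
  · exact ⟨(x - 26) % 4, (x - 26) / 4, 1, 0, by omega, by omega⟩
  · exact ⟨0, 0, 0, 1, by omega, by omega⟩

/-- For `A₄ = {1, 4, 26, 35}`: `h₀ = 8` (every integer in `[0, 35]` is a sum of at most 8
elements with repetition, but not every such integer is a sum of at most 7), and
`n(7, A₄) = 22` (every integer in `[0, 22]` is a sum of at most 7 elements, but 23 is not). -/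
theorem stmt10 :
    (∀ x ≤ 35, IsRep 4 A4a 8 x) ∧
    (¬ ∀ x ≤ 35, IsRep 4 A4a 7 x) ∧
    (∀ x ≤ 22, IsRep 4 A4a 7 x) ∧
    ¬ IsRep 4 A4a 7 23 :=
  ⟨fun _ => isRep_A4a_eight, fun h => not_isRep_A4a_seven_23 (h 23 (by norm_num)),
    isRange_A4a_seven⟩
end

section
/- Let H be any integer satisfying H·(a_k - a_{k-1}) ≥ (h₀-1)·a_k - n(h₀-1, A_k). Then for all h ≥ H and all x with n(h, A_k) < x < h·a_k, if x has an h-representation with c_k = 0, then x ≤ h·a_{k-1}; consequently any gap x at level h ≥ H satisfies: x + a_k is a gap at level h+1. In particular H ≥ h₂. -/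
/-- `x` is a gap at level `h`: `n(h) < x < h·a k` and `x` has no `h`-representation. -/
def IsGap (k : ℕ) (a : ℕ → ℕ) (n : ℕ → ℕ) (h x : ℕ) : Prop :=
  n h < x ∧ x < h * a k ∧ ¬ IsRep k a h x

open Finset

/-!
Removing one copy of `a k` from a representation of `x + a k` at level `h + 1` gives a
representation of `x` at level `h`, so a gap can only fail to persist through a representation
of `x + a k` avoiding `a k`; such a representation is at most `(h + 1)·a (k-1)`. By Theorem 1,
`n h` grows by `a k` per level from `h₀ - 1` on, and the choice of `H` makes
`h·a (k-1) ≤ n h` for `h ≥ H`, which puts `x + a k > n h + a (k-1)` out of reach.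
-/

section Coefficients

variable {s : Finset ℕ} {k : ℕ}

theorem sum_add_single (hk : k ∈ s) (c : ℕ → ℕ) (d : ℕ) :
    ∑ i ∈ s, (c + Pi.single k d : ℕ → ℕ) i = ∑ i ∈ s, c i + d := by
  simp only [Pi.add_apply, sum_add_distrib, sum_pi_single', if_pos hk]

theorem sum_add_single_mul (hk : k ∈ s) (c a : ℕ → ℕ) (d : ℕ) :
    ∑ i ∈ s, (c + Pi.single k d : ℕ → ℕ) i * a i = ∑ i ∈ s, c i * a i + d * a k := by
  simp only [Pi.add_apply, add_mul, sum_add_distrib, ← Pi.single_mul_left_apply,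
    sum_pi_single', if_pos hk]

theorem sub_single_add_single {c : ℕ → ℕ} (hck : c k ≠ 0) :
    c - Pi.single k 1 + Pi.single k 1 = c := by
  funext i
  rcases eq_or_ne i k with rfl | hik
  · simp only [Pi.add_apply, Pi.sub_apply, Pi.single_eq_same]; omega
  · simp [hik]

end Coefficients

section Representations

variable {k : ℕ} {a : ℕ → ℕ} {h x : ℕ}

theorem IsRep.mono {h' : ℕ} (hx : IsRep k a h x) (hh : h ≤ h') : IsRep k a h' x :=
  let ⟨c, hc, hv⟩ := hx
  ⟨c, hc.trans hh, hv⟩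

theorem IsRep.add_top (hk : 1 ≤ k) (hx : IsRep k a h x) : IsRep k a (h + 1) (x + a k) := by
  obtain ⟨c, hc, hv⟩ := hx
  have hkmem : k ∈ Icc 1 k := mem_Icc.2 ⟨hk, le_rfl⟩
  refine ⟨c + Pi.single k 1, ?_, ?_⟩
  · rw [sum_add_single hkmem]; omega
  · rw [sum_add_single_mul hkmem, hv, one_mul]

theorem isRep_of_coeff_top_ne_zero (hk : 1 ≤ k) {c : ℕ → ℕ}
    (hc : ∑ i ∈ Icc 1 k, c i ≤ h + 1) (hv : ∑ i ∈ Icc 1 k, c i * a i = x + a k)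
    (hck : c k ≠ 0) : IsRep k a h x := by
  have hkmem : k ∈ Icc 1 k := mem_Icc.2 ⟨hk, le_rfl⟩
  rw [← sub_single_add_single hck] at hc hv
  rw [sum_add_single hkmem] at hc
  rw [sum_add_single_mul hkmem, one_mul] at hv
  exact ⟨c - Pi.single k 1, by omega, by omega⟩

theorem sum_mul_le_of_coeff_top_eq_zero (hmono : MonotoneOn a (Set.Icc 1 k)) {c : ℕ → ℕ}
    (hck : c k = 0) : ∑ i ∈ Icc 1 k, c i * a i ≤ (∑ i ∈ Icc 1 k, c i) * a (k - 1) := by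
  rw [sum_mul]
  refine sum_le_sum fun i hi => ?_
  obtain ⟨hi1, hik⟩ := mem_Icc.1 hi
  rcases hik.eq_or_lt with rfl | hik
  · simp [hck]
  · exact Nat.mul_le_mul_left _ (hmono ⟨hi1, hik.le⟩ ⟨by omega, by omega⟩ (by omega))

end Representations

section Range

variable {k : ℕ} {a : ℕ → ℕ} {n : ℕ → ℕ} (hn : ∀ h, IsRange k a h (n h))
include hn

theorem range_monotone : Monotone n :=
  monotone_nat_of_le_succ fun h => not_lt.1 fun hlt =>
    (hn (h + 1)).2 (((hn h).1 _ hlt).mono h.le_succ)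

theorem range_add_top_le (hk : 1 ≤ k) {h : ℕ} (hak : a k ≤ n (h + 1)) :
    n h + a k ≤ n (h + 1) := by
  have hrep : ∀ y ≤ n h + a k, IsRep k a (h + 1) y := by
    intro y hy
    rcases le_or_gt y (a k) with hya | hya
    · exact (hn (h + 1)).1 y (hya.trans hak)
    · have := ((hn h).1 (y - a k) (by omega)).add_top hk
      rwa [Nat.sub_add_cancel hya.le] at this
  exact not_lt.1 fun hlt => (hn (h + 1)).2 (hrep _ hlt)

/-- Theorem 1. -/
theorem range_add_mul_le (hk : 1 ≤ k) {h : ℕ} (hak : a k ≤ n (h + 1)) (d : ℕ) :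
    n h + d * a k ≤ n (h + d) := by
  induction d with
  | zero => simp
  | succ d ih =>
    have hstep :=
      range_add_top_le hn hk (hak.trans (range_monotone hn (by omega : h + 1 ≤ h + d + 1)))
    calc n h + (d + 1) * a k = (n h + d * a k) + a k := by ring
      _ ≤ n (h + d) + a k := by omega
      _ ≤ n (h + (d + 1)) := hstep

theorem IsGap.add_top (hk : 1 ≤ k) (hmono : MonotoneOn a (Set.Icc 1 k))
    (hak : a (k - 1) ≤ a k) {h x : ℕ} (hrange : h * a (k - 1) ≤ n h) (hx : IsGap k a n h x) :
    IsGap k a n (h + 1) (x + a k) := by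
  obtain ⟨hnx, hxh, hxrep⟩ := hx
  have hnrep : ¬ IsRep k a (h + 1) (x + a k) := by
    rintro ⟨c, hc, hv⟩
    by_cases hck : c k = 0
    · have hle := (sum_mul_le_of_coeff_top_eq_zero hmono hck).trans
        (Nat.mul_le_mul_right (a (k - 1)) hc)
      rw [hv, add_mul, one_mul] at hle
      omega
    · exact hxrep (isRep_of_coeff_top_ne_zero hk hc hv hck)
  refine ⟨not_le.1 fun hle => hnrep ((hn (h + 1)).1 _ hle), by rw [add_mul, one_mul]; omega,
    hnrep⟩

end Range

section Threshold

variable {k : ℕ} {a : ℕ → ℕ} {n : ℕ → ℕ} {h₀ H : ℕ}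
  (hH : (h₀ - 1) * a k ≤ H * (a k - a (k - 1)) + n (h₀ - 1))
include hH

theorem pred_le_of_threshold (hmin : ∀ h, a k ≤ n h → h₀ ≤ h) : h₀ - 1 ≤ H := by
  rcases Nat.eq_zero_or_pos h₀ with rfl | hpos
  · exact Nat.zero_le H
  have hlow : n (h₀ - 1) < a k := not_le.1 fun hle => by have := hmin _ hle; omega
  refine Nat.le_of_lt_succ (Nat.lt_of_mul_lt_mul_right (a := a k) ?_)
  calc (h₀ - 1) * a k ≤ H * (a k - a (k - 1)) + n (h₀ - 1) := hH
    _ < H * a k + a k := add_lt_add_of_le_of_lt (Nat.mul_le_mul_left H (Nat.sub_le _ _)) hlow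
    _ = (H + 1) * a k := by ring

theorem mul_le_range_of_threshold_le (hn : ∀ h, IsRange k a h (n h)) (hk : 1 ≤ k)
    (hak : a (k - 1) ≤ a k) (hh₀ : a k ≤ n h₀) (hmin : ∀ h, a k ≤ n h → h₀ ≤ h)
    {h : ℕ} (hHh : H ≤ h) : h * a (k - 1) ≤ n h := by
  have hmh : h₀ - 1 ≤ h := (pred_le_of_threshold hH hmin).trans hHh
  have hgrowth : n (h₀ - 1) + (h - (h₀ - 1)) * a k ≤ n h := by
    have := range_add_mul_le hn (h := h₀ - 1) hk
      (hh₀.trans (range_monotone hn (by omega))) (h - (h₀ - 1))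
    rwa [Nat.add_sub_cancel' hmh] at this
  have hHD : H * (a k - a (k - 1)) ≤ h * (a k - a (k - 1)) := Nat.mul_le_mul_right _ hHh
  zify [hak, hmh] at hH hgrowth hHD ⊢
  linarith

end Threshold

theorem stmt14_general (k : ℕ) (hk : 2 ≤ k) (a : ℕ → ℕ)
    (hmono : StrictMonoOn a (Set.Icc 1 k))
    (n : ℕ → ℕ) (hn : ∀ h, IsRange k a h (n h))
    (h₀ : ℕ) (hh₀ : a k ≤ n h₀) (hmin : ∀ h, a k ≤ n h → h₀ ≤ h)
    (H : ℕ) (hH : (h₀ - 1) * a k ≤ H * (a k - a (k - 1)) + n (h₀ - 1))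
    (h₂ : ℕ)
    (h₂min : ∀ h', (∀ h, h' ≤ h → ∀ x, IsGap k a n h x → IsGap k a n (h + 1) (x + a k)) →
      h₂ ≤ h') :
    (∀ h, H ≤ h → ∀ x, n h < x → x < h * a k →
      ∀ c : ℕ → ℕ, (∑ i ∈ Finset.Icc 1 k, c i) ≤ h →
        (∑ i ∈ Finset.Icc 1 k, c i * a i) = x → c k = 0 → x ≤ h * a (k - 1)) ∧
    (∀ h, H ≤ h → ∀ x, IsGap k a n h x → IsGap k a n (h + 1) (x + a k)) ∧
    h₂ ≤ H := by
  have hak : a (k - 1) ≤ a k :=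
    hmono.monotoneOn ⟨by omega, by omega⟩ ⟨by omega, le_rfl⟩ (by omega)
  have hpers : ∀ h, H ≤ h → ∀ x, IsGap k a n h x → IsGap k a n (h + 1) (x + a k) :=
    fun h hHh x hx => hx.add_top hn (by omega) hmono.monotoneOn hak
      (mul_le_range_of_threshold_le hH hn (by omega) hak hh₀ hmin hHh)
  refine ⟨fun h _ x _ _ c hc hv hck => ?_, hpers, h₂min H hpers⟩
  exact hv ▸ (sum_mul_le_of_coeff_top_eq_zero hmono.monotoneOn hck).trans
    (Nat.mul_le_mul_right _ hc)

/-- Let `H` satisfy `H·(a k - a (k-1)) ≥ (h₀-1)·a k - n(h₀-1)`. Then for all `h ≥ H` and all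
`n(h) < x < h·a k`: any `h`-representation of `x` with `c k = 0` forces `x ≤ h·a (k-1)`;
consequently every gap `x` at level `h ≥ H` persists (`x + a k` is a gap at level `h+1`).
In particular `H ≥ h₂`, where `h₂` is minimal such that all gaps persist from `h₂` on. -/
theorem stmt14 (k : ℕ) (hk : 2 ≤ k) (a : ℕ → ℕ) (ha1 : a 1 = 1)
    (hmono : StrictMonoOn a (Set.Icc 1 k))
    (n : ℕ → ℕ) (hn : ∀ h, IsRange k a h (n h))
    (h₀ : ℕ) (hh₀ : a k ≤ n h₀) (hmin : ∀ h, a k ≤ n h → h₀ ≤ h)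
    (H : ℕ) (hH : (h₀ - 1) * a k ≤ H * (a k - a (k - 1)) + n (h₀ - 1))
    (h₂ : ℕ)
    (h₂pers : ∀ h, h₂ ≤ h → ∀ x, IsGap k a n h x → IsGap k a n (h + 1) (x + a k))
    (h₂min : ∀ h', (∀ h, h' ≤ h → ∀ x, IsGap k a n h x → IsGap k a n (h + 1) (x + a k)) →
      h₂ ≤ h') :
    (∀ h, H ≤ h → ∀ x, n h < x → x < h * a k →
      ∀ c : ℕ → ℕ, (∑ i ∈ Finset.Icc 1 k, c i) ≤ h →
        (∑ i ∈ Finset.Icc 1 k, c i * a i) = x → c k = 0 → x ≤ h * a (k - 1)) ∧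
    (∀ h, H ≤ h → ∀ x, IsGap k a n h x → IsGap k a n (h + 1) (x + a k)) ∧
    h₂ ≤ H :=
  stmt14_general k hk a hmono n hn h₀ hh₀ hmin H hH h₂ h₂min
end
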